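/- The map assigning to each Lagrangian W of V containing no perfect cube the 4-element set of double roots of its elements with a repeated root is a bijection from the set of all Lagrangians of V containing no perfect cube onto the set of all 4-element subsets of ℂℙ¹ that admit an ordering whose cross-ratio equals (1 − √3 i)/2 (i.e., onto the set of ideal vertex sets of regular ideal hyperbolic tetrahedra). -/

import Mathlib

noncomputable section

open MvPolynomial

/-- The polynomial ring `ℂ[X,Y]`. -/
abbrev P2 : Type := MvPolynomial (Fin 2) ℂ

/-- The variable `X`. -/
def Xv : P2 := X 0

/-- The variable `Y`. -/
def Yv : P2 := X 1

/-- `V`: the space of homogeneous cubic polynomials in `X, Y`. -/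
def Vcubic : Submodule ℂ P2 := homogeneousSubmodule (Fin 2) ℂ 3

/-- The coefficient of `X^i Y^j`. -/
def cf (i j : ℕ) (p : P2) : ℂ := coeff (Finsupp.single 0 i + Finsupp.single 1 j) p

/-- The alternating bilinear form `ω` with `ω(X³,Y³) = 1`, `ω(X²Y,XY²) = -1/3`,
all other pairings of distinct basis vectors being `0`. -/
def omegaForm (p q : P2) : ℂ :=
  cf 3 0 p * cf 0 3 q - cf 0 3 p * cf 3 0 q
    - (1 / 3) * (cf 2 1 p * cf 1 2 q - cf 1 2 p * cf 2 1 q)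

/-- The linear form `b X - a Y` associated to the point `[a : b] ∈ ℂℙ¹`. -/
def lf (a b : ℂ) : P2 := C b * Xv - C a * Yv

/-- A Lagrangian of `V`: a 2-dimensional subspace contained in `V` on which `ω` vanishes. -/
def IsLagrangian (W : Submodule ℂ P2) : Prop :=
  W ≤ Vcubic ∧ Module.finrank ℂ W = 2 ∧ ∀ p ∈ W, ∀ q ∈ W, omegaForm p q = 0

/-- A perfect cube: a nonzero element of the form `c • (bX - aY)³`. -/
def IsPerfectCube (p : P2) : Prop :=
  ∃ c a b : ℂ, c ≠ 0 ∧ (a ≠ 0 ∨ b ≠ 0) ∧ p = C c * lf a b ^ 3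

/-- The action of `SL(2,ℂ)` on `ℂ[X,Y]` by linear substitution of the variables. -/
def subst (g : Matrix.SpecialLinearGroup (Fin 2) ℂ) : P2 →ₐ[ℂ] P2 :=
  aeval (fun i => C (g.1 i 0) * Xv + C (g.1 i 1) * Yv)

/-- The induced action of `SL(2,ℂ)` on subspaces of `ℂ[X,Y]`. -/
def mapAct (g : Matrix.SpecialLinearGroup (Fin 2) ℂ) (W : Submodule ℂ P2) :
    Submodule ℂ P2 :=
  W.map (subst g).toLinearMap

/-- The `SL(2,ℂ)`-orbit of a subspace. -/
def slOrbit (W₀ : Submodule ℂ P2) : Set (Submodule ℂ P2) := {W | ∃ g, W = mapAct g W₀}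

/-- A repeated root: some `(bX-aY)²` divides `p`. -/
def HasRepeatedRoot (p : P2) : Prop :=
  ∃ a b : ℂ, (a ≠ 0 ∨ b ≠ 0) ∧ lf a b ^ 2 ∣ p

/-- The cross-ratio of four points of `ℂℙ¹` given in homogeneous coordinates
`zᵢ = [aᵢ : bᵢ]` (encoded as pairs `(aᵢ, bᵢ)`):
`[z₁,z₂,z₃,z₄] = ((a₃b₁ - a₁b₃)(a₄b₂ - a₂b₄)) / ((a₃b₂ - a₂b₃)(a₄b₁ - a₁b₄))`. -/
def crossRatio (z₁ z₂ z₃ z₄ : ℂ × ℂ) : ℂ :=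
  ((z₃.1 * z₁.2 - z₁.1 * z₃.2) * (z₄.1 * z₂.2 - z₂.1 * z₄.2)) /
    ((z₃.1 * z₂.2 - z₂.1 * z₃.2) * (z₄.1 * z₁.2 - z₁.1 * z₄.2))

/-- `√3` as a complex number. -/
def sqrt3 : ℂ := (Real.sqrt 3 : ℝ)

/-- `∛2` as a complex number. -/
def cbrt2 : ℂ := ((2 : ℝ) ^ ((1 : ℝ) / 3) : ℝ)

/-- `∛4` as a complex number. -/
def cbrt4 : ℂ := ((4 : ℝ) ^ ((1 : ℝ) / 3) : ℝ)

/-- `ℂℙ¹` as the projectivization of `ℂ²`. -/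
abbrev CP1 : Type := Projectivization ℂ (ℂ × ℂ)

/-- The point `[a:b] ∈ ℂℙ¹` is a double root of `p`, i.e. `(bX-aY)²` divides `p`. -/
def IsDoubleRootOf (P : CP1) (p : P2) : Prop :=
  ∃ (a b : ℂ) (h : (a, b) ≠ (0, 0)), P = Projectivization.mk ℂ (a, b) h ∧ lf a b ^ 2 ∣ p

/-- The set of double roots of the (nonzero) elements of `W` having a repeated root. -/
def doubleRootSet (W : Submodule ℂ P2) : Set CP1 :=
  {P : CP1 | ∃ q : P2, q ≠ 0 ∧ q ∈ W ∧ IsDoubleRootOf P q}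

/-- A 4-element subset of `ℂℙ¹` admitting an ordering with cross-ratio `(1-√3 i)/2`,
i.e. the ideal vertex set of a regular ideal hyperbolic tetrahedron. -/
def IsRegularIdealVertexSet (S : Set CP1) : Prop :=
  ∃ (z : Fin 4 → ℂ × ℂ) (h : ∀ i, z i ≠ (0, 0)),
    Function.Injective (fun i : Fin 4 => Projectivization.mk ℂ (z i) (h i)) ∧
    S = Set.range (fun i : Fin 4 => Projectivization.mk ℂ (z i) (h i)) ∧
    crossRatio (z 0) (z 1) (z 2) (z 3) = (1 - sqrt3 * Complex.I) / 2


/-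
Substituting `g ∈ SL(2, ℂ)` preserves `ω`, perfect cubes and hence cube-free Lagrangians; it moves
double roots by the projective action of `g⁻¹` and preserves cross-ratios. A cubic `x p + y q` has
a double root at `z` iff `x ∇p(z) + y ∇q(z) = 0`, so the double roots of the pencil `span {p, q}`
are the zeros of the Jacobian `det (∇p, ∇q)`, a binary quartic: every Lagrangian contains a cubic
with a double root. Sending that root to `∞`, shearing, using `ω = 0` and rescaling brings every
cube-free Lagrangian to `W₀ = span {XY², X³ + 2Y³}`, whose double roots are `∞, 1, ζ, ζ²`
(`ζ³ = 1`, `ζ ≠ 1`), a set of cross-ratio `(1 - √3 i)/2`.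

Injectivity: a cube-free Lagrangian with double roots `∞, 1, ζ, ζ²` is spanned by its elements
`Y² (cX + dY)` and `(X - Y)² (…)`, and the Jacobian conditions at `ζ, ζ²` together with `ω = 0`
force it to be `W₀`. Surjectivity: `SL(2, ℂ)` is transitive on triples of distinct points of
`ℂℙ¹`, and three points together with the cross-ratio determine the fourth.
-/

namespace BinaryCubic

def cubic (a b c d : ℂ) : P2 :=
  C a * Xv ^ 3 + C b * (Xv ^ 2 * Yv) + C c * (Xv * Yv ^ 2) + C d * Yv ^ 3

def expVec (i j : ℕ) : Fin 2 →₀ ℕ := Finsupp.single 0 i + Finsupp.single 1 j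

@[simp] lemma expVec_inj {i j k l : ℕ} : expVec i j = expVec k l ↔ i = k ∧ j = l := by
  simp [expVec, Finsupp.ext_iff, Fin.forall_fin_two]

@[simp] lemma degree_expVec (i j : ℕ) : (expVec i j).degree = i + j := by
  simp [expVec, map_add]

lemma cf_eq_coeff (i j : ℕ) (p : P2) : cf i j p = coeff (expVec i j) p := rfl

lemma C_mul_X_pow_mul_Y_pow (a : ℂ) (i j : ℕ) :
    C a * (Xv ^ i * Yv ^ j) = monomial (expVec i j) a := by
  simp [Xv, Yv, expVec, X_pow_eq_monomial, monomial_mul, C_mul_monomial]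

lemma cubic_eq_sum_monomial (a b c d : ℂ) : cubic a b c d =
    monomial (expVec 3 0) a + monomial (expVec 2 1) b + monomial (expVec 1 2) c +
      monomial (expVec 0 3) d := by
  simp only [← C_mul_X_pow_mul_Y_pow, cubic]; ring

@[simp] lemma cf_cubic_30 (a b c d : ℂ) : cf 3 0 (cubic a b c d) = a := by
  simp [cubic_eq_sum_monomial, cf_eq_coeff, coeff_monomial]

@[simp] lemma cf_cubic_21 (a b c d : ℂ) : cf 2 1 (cubic a b c d) = b := by
  simp [cubic_eq_sum_monomial, cf_eq_coeff, coeff_monomial]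

@[simp] lemma cf_cubic_12 (a b c d : ℂ) : cf 1 2 (cubic a b c d) = c := by
  simp [cubic_eq_sum_monomial, cf_eq_coeff, coeff_monomial]

@[simp] lemma cf_cubic_03 (a b c d : ℂ) : cf 0 3 (cubic a b c d) = d := by
  simp [cubic_eq_sum_monomial, cf_eq_coeff, coeff_monomial]

lemma eq_cubic_of_mem_Vcubic {p : P2} (hp : p ∈ Vcubic) :
    p = cubic (cf 3 0 p) (cf 2 1 p) (cf 1 2 p) (cf 0 3 p) := by
  have hhom : p.IsHomogeneous 3 := (mem_homogeneousSubmodule _ _).mp hp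
  ext m
  obtain ⟨i, j, rfl⟩ : ∃ i j, m = expVec i j :=
    ⟨m 0, m 1, by ext k; fin_cases k <;> simp [expVec]⟩
  by_cases hij : i + j = 3
  · obtain ⟨rfl, rfl⟩ | ⟨rfl, rfl⟩ | ⟨rfl, rfl⟩ | ⟨rfl, rfl⟩ :
        (i = 3 ∧ j = 0) ∨ (i = 2 ∧ j = 1) ∨ (i = 1 ∧ j = 2) ∨ (i = 0 ∧ j = 3) := by
      omega
    all_goals simp [cubic_eq_sum_monomial, coeff_monomial, cf_eq_coeff]
  · rw [hhom.coeff_eq_zero (by simpa using hij)]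
    simp only [cubic_eq_sum_monomial, coeff_add, coeff_monomial, expVec_inj]
    split_ifs <;> first | omega | simp

lemma exists_eq_cubic {p : P2} (hp : p ∈ Vcubic) : ∃ a b c d : ℂ, p = cubic a b c d :=
  ⟨_, _, _, _, eq_cubic_of_mem_Vcubic hp⟩

lemma cubic_mem_Vcubic (a b c d : ℂ) : cubic a b c d ∈ Vcubic := by
  rw [cubic_eq_sum_monomial, Vcubic]
  refine add_mem (add_mem (add_mem ?_ ?_) ?_) ?_ <;>
    exact (mem_homogeneousSubmodule _ _).mpr (isHomogeneous_monomial _ (by simp))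

lemma smul_cubic (t a b c d : ℂ) :
    t • cubic a b c d = cubic (t * a) (t * b) (t * c) (t * d) := by
  simp only [smul_eq_C_mul, cubic, map_mul]; ring

lemma cubic_add_cubic (a b c d a' b' c' d' : ℂ) :
    cubic a b c d + cubic a' b' c' d' = cubic (a + a') (b + b') (c + c') (d + d') := by
  simp only [cubic, map_add]; ring

lemma cubic_sub_cubic (a b c d a' b' c' d' : ℂ) :
    cubic a b c d - cubic a' b' c' d' = cubic (a - a') (b - b') (c - c') (d - d') := by
  simp only [cubic, map_sub]; ring

lemma cubic_eq_zero_iff {a b c d : ℂ} :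
    cubic a b c d = 0 ↔ a = 0 ∧ b = 0 ∧ c = 0 ∧ d = 0 := by
  constructor
  · intro h
    have h₃₀ := cf_cubic_30 a b c d
    have h₂₁ := cf_cubic_21 a b c d
    have h₁₂ := cf_cubic_12 a b c d
    have h₀₃ := cf_cubic_03 a b c d
    simp only [h, cf, coeff_zero] at h₃₀ h₂₁ h₁₂ h₀₃
    exact ⟨h₃₀.symm, h₂₁.symm, h₁₂.symm, h₀₃.symm⟩
  · rintro ⟨rfl, rfl, rfl, rfl⟩
    simp [cubic]

lemma omegaForm_cubic (a b c d a' b' c' d' : ℂ) :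
    omegaForm (cubic a b c d) (cubic a' b' c' d') =
      a * d' - d * a' - (1 / 3) * (b * c' - c * b') := by
  simp [omegaForm]

lemma C_mul_lf_pow_three (c a b : ℂ) :
    C c * lf a b ^ 3 =
      cubic (c * b ^ 3) (-(3 * c * a * b ^ 2)) (3 * c * a ^ 2 * b) (-(c * a ^ 3)) := by
  simp only [lf, cubic, map_mul, map_neg, map_pow, map_ofNat]
  ring

lemma isPerfectCube_xCube {a : ℂ} (ha : a ≠ 0) : IsPerfectCube (cubic a 0 0 0) :=
  ⟨a, 0, 1, ha, Or.inr one_ne_zero, by rw [C_mul_lf_pow_three]; congr 1 <;> ring⟩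

lemma isPerfectCube_yCube {d : ℂ} (hd : d ≠ 0) : IsPerfectCube (cubic 0 0 0 d) :=
  ⟨-d, 1, 0, neg_ne_zero.mpr hd, Or.inl one_ne_zero,
    by rw [C_mul_lf_pow_three]; congr 1 <;> ring⟩

def gradAt (p : P2) (z : ℂ × ℂ) : ℂ × ℂ :=
  (eval ![z.1, z.2] (pderiv 0 p), eval ![z.1, z.2] (pderiv 1 p))

lemma gradAt_cubic (a b c d : ℂ) (z : ℂ × ℂ) : gradAt (cubic a b c d) z =
    (3 * a * z.1 ^ 2 + 2 * b * z.1 * z.2 + c * z.2 ^ 2,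
      b * z.1 ^ 2 + 2 * c * z.1 * z.2 + 3 * d * z.2 ^ 2) := by
  simp only [gradAt, cubic, Xv, Yv, map_add, map_mul, map_pow, Derivation.leibniz,
    Derivation.leibniz_pow, derivation_C, pderiv_X, Pi.single_eq_same, Pi.single_eq_of_ne,
    smul_eq_mul, nsmul_eq_mul, Nat.cast_ofNat, map_ofNat, map_zero, map_one, eval_C, eval_X,
    Matrix.cons_val_zero,
    Matrix.cons_val_one, Matrix.cons_val_fin_one, ne_eq, zero_ne_one, one_ne_zero,
    not_false_eq_true]
  ext <;> ring

lemma gradAt_add_smul (x y : ℂ) (p q : P2) (z : ℂ × ℂ) :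
    gradAt (x • p + y • q) z = x • gradAt p z + y • gradAt q z := by
  simp [gradAt]

lemma gradAt_eq_zero_of_lf_sq_dvd {p : P2} {z : ℂ × ℂ} (h : lf z.1 z.2 ^ 2 ∣ p) :
    gradAt p z = 0 := by
  obtain ⟨s, rfl⟩ := h
  have hlf : eval ![z.1, z.2] (lf z.1 z.2) = 0 := by
    simp only [lf, Xv, Yv, map_sub, map_mul, eval_C, eval_X, Matrix.cons_val_zero,
      Matrix.cons_val_one, Matrix.cons_val_fin_one]
    ring
  simp [gradAt, Derivation.leibniz, Derivation.leibniz_pow, hlf]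

lemma lf_sq_mul_linear (a b α β : ℂ) :
    lf a b ^ 2 * (C α * Xv + C β * Yv) =
      cubic (b ^ 2 * α) (b ^ 2 * β - 2 * a * b * α) (a ^ 2 * α - 2 * a * b * β) (a ^ 2 * β) := by
  simp only [lf, cubic, map_sub, map_mul, map_pow, map_ofNat]
  ring

lemma lf_sq_dvd_cubic_of_gradAt_eq_zero {a b c d : ℂ} {z : ℂ × ℂ} (hz : z ≠ 0)
    (h : gradAt (cubic a b c d) z = 0) : lf z.1 z.2 ^ 2 ∣ cubic a b c d := by
  obtain ⟨u, v⟩ := z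
  simp only [gradAt_cubic, Prod.mk_eq_zero] at h hz ⊢
  obtain ⟨h₁, h₂⟩ := h
  by_cases hv : v = 0
  · subst hv
    have hu : u ≠ 0 := by simpa using hz
    refine ⟨C (c / u ^ 2) * Xv + C (d / u ^ 2) * Yv, ?_⟩
    rw [lf_sq_mul_linear]
    have ha : a = 0 := by simpa [hu] using h₁
    have hb : b = 0 := by simpa [hu] using h₂
    congr 1 <;> field_simp <;> simp [ha, hb]
  · refine ⟨C (a / v ^ 2) * Xv + C ((b * v + 2 * u * a) / v ^ 3) * Yv, ?_⟩
    rw [lf_sq_mul_linear]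
    congr 1 <;> field_simp
    · ring
    · linear_combination h₁
    · linear_combination (v * h₂ - 2 * u * h₁) / 3

lemma lf_sq_dvd_iff_gradAt_eq_zero {p : P2} (hp : p ∈ Vcubic) {z : ℂ × ℂ} (hz : z ≠ 0) :
    lf z.1 z.2 ^ 2 ∣ p ↔ gradAt p z = 0 := by
  obtain ⟨a, b, c, d, rfl⟩ := exists_eq_cubic hp
  exact ⟨gradAt_eq_zero_of_lf_sq_dvd, lf_sq_dvd_cubic_of_gradAt_eq_zero hz⟩

lemma lf_smul (t : ℂ) (z : ℂ × ℂ) : lf (t • z).1 (t • z).2 = C t * lf z.1 z.2 := by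
  simp only [lf, Prod.smul_fst, Prod.smul_snd, smul_eq_mul, map_mul]; ring

lemma lf_sq_dvd_iff_of_mk_eq {z w : ℂ × ℂ} {hz : z ≠ 0} {hw : w ≠ 0}
    (h : Projectivization.mk ℂ z hz = Projectivization.mk ℂ w hw) (q : P2) :
    lf z.1 z.2 ^ 2 ∣ q ↔ lf w.1 w.2 ^ 2 ∣ q := by
  obtain ⟨t, rfl⟩ := (Projectivization.mk_eq_mk_iff ℂ z w hz hw).mp h
  rw [Units.smul_def, lf_smul, mul_pow, ← map_pow]
  exact ((t.isUnit.pow 2).map C).mul_left_dvd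

lemma mk_mem_doubleRootSet_iff {W : Submodule ℂ P2} {z : ℂ × ℂ} (hz : z ≠ 0) :
    Projectivization.mk ℂ z hz ∈ doubleRootSet W ↔
      ∃ q ∈ W, q ≠ 0 ∧ lf z.1 z.2 ^ 2 ∣ q := by
  constructor
  · rintro ⟨q, hq0, hqW, a, b, hab, hmk, hdvd⟩
    exact ⟨q, hqW, hq0, (lf_sq_dvd_iff_of_mk_eq hmk q).mpr hdvd⟩
  · rintro ⟨q, hqW, hq0, hdvd⟩
    exact ⟨q, hq0, hqW, z.1, z.2, hz, rfl, hdvd⟩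

section Wedge
variable {K : Type*} [Field K]

def wedge (u v : K × K) : K := u.1 * v.2 - v.1 * u.2

@[simp] lemma wedge_smul_left (t : K) (u v : K × K) : wedge (t • u) v = t * wedge u v := by
  simp only [wedge, Prod.smul_fst, Prod.smul_snd, smul_eq_mul]; ring

@[simp] lemma wedge_smul_right (t : K) (u v : K × K) : wedge u (t • v) = t * wedge u v := by
  simp only [wedge, Prod.smul_fst, Prod.smul_snd, smul_eq_mul]; ring

lemma wedge_eq_zero_iff_exists {u v : K × K} :
    wedge u v = 0 ↔ ∃ x y : K, (x, y) ≠ 0 ∧ x • u + y • v = 0 := by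
  have hdet : (!![u.1, v.1; u.2, v.2]).det = wedge u v := by
    simp [Matrix.det_fin_two, wedge]
  rw [← hdet, ← Matrix.exists_mulVec_eq_zero_iff]
  constructor
  · rintro ⟨w, hw, hMw⟩
    refine ⟨w 0, w 1, fun h => hw ?_, ?_⟩
    · ext i; fin_cases i <;> simp_all
    · have h0 := congrFun hMw 0
      have h1 := congrFun hMw 1
      simp only [Matrix.mulVec, dotProduct, Fin.sum_univ_two, Matrix.of_apply, Matrix.cons_val',
        Matrix.cons_val_zero, Matrix.cons_val_one, Matrix.cons_val_fin_one, Pi.zero_apply] at h0 h1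
      ext
      · simp only [Prod.fst_add, Prod.smul_fst, smul_eq_mul, Prod.fst_zero]
        linear_combination h0
      · simp only [Prod.snd_add, Prod.smul_snd, smul_eq_mul, Prod.snd_zero]
        linear_combination h1
  · rintro ⟨x, y, hxy, h⟩
    refine ⟨![x, y], fun h0 => hxy ?_, ?_⟩
    · simpa using congrFun h0
    · have h1 := congrArg Prod.fst h
      have h2 := congrArg Prod.snd h
      simp only [Prod.fst_add, Prod.snd_add, Prod.smul_fst, Prod.smul_snd, smul_eq_mul,
        Prod.fst_zero, Prod.snd_zero] at h1 h2
      ext i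
      fin_cases i <;>
        simp only [Matrix.mulVec, dotProduct, Fin.sum_univ_two, Matrix.of_apply, Matrix.cons_val',
          Matrix.cons_val_zero, Matrix.cons_val_one, Matrix.cons_val_fin_one, Pi.zero_apply,
          Fin.zero_eta, Fin.mk_one]
      · linear_combination h1
      · linear_combination h2

end Wedge

section LinearAlgebra
variable {K V : Type*} [Field K] [AddCommGroup V] [Module K V]

lemma span_pair_eq_of_finrank_eq_two {W : Submodule K V} (hW : Module.finrank K W = 2)
    {u v : V} (huv : LinearIndependent K ![u, v]) (hu : u ∈ W) (hv : v ∈ W) :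
    Submodule.span K {u, v} = W := by
  have : FiniteDimensional K W := Module.finite_of_finrank_pos (by omega)
  apply Submodule.eq_of_le_of_finrank_eq
  · rw [Submodule.span_le]
    rintro _ (rfl | rfl) <;> assumption
  · rw [hW, ← Matrix.range_cons_cons_empty u v ![], finrank_span_eq_card huv, Fintype.card_fin]

lemma exists_linearIndependent_pair_of_finrank_eq_two {W : Submodule K V}
    (hW : Module.finrank K W = 2) :
    ∃ u v : V, LinearIndependent K ![u, v] ∧ u ∈ W ∧ v ∈ W := by
  have : FiniteDimensional K W := Module.finite_of_finrank_pos (by omega)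
  let b := Module.finBasisOfFinrankEq K W hW
  refine ⟨b 0, b 1, ?_, (b 0).2, (b 1).2⟩
  have hb := b.linearIndependent.map' W.subtype (Submodule.ker_subtype W)
  have hcoe : W.subtype ∘ b = ![(b 0 : V), b 1] := by
    ext i
    fin_cases i <;> rfl
  rwa [hcoe] at hb

end LinearAlgebra

lemma exists_ne_zero_binaryForm_eq_zero {n : ℕ} (hn : 0 < n) (c : ℕ → ℂ) :
    ∃ z : ℂ × ℂ, z ≠ 0 ∧
      ∑ i ∈ Finset.range (n + 1), c i * z.1 ^ i * z.2 ^ (n - i) = 0 := by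
  by_cases hc : c n = 0
  · refine ⟨(1, 0), by simp, ?_⟩
    rw [Finset.sum_range_succ, Finset.sum_eq_zero]
    · simp [hc]
    · intro i hi
      simp [zero_pow (Nat.sub_ne_zero_of_lt (Finset.mem_range.mp hi))]
  · set f : Polynomial ℂ := ∑ i ∈ Finset.range (n + 1), Polynomial.C (c i) * Polynomial.X ^ i
    have hf : 0 < f.degree := by
      have hcoeff : f.coeff n = c n := by
        simp [f, Polynomial.finsetSum_coeff]
      rw [← Polynomial.natDegree_pos_iff_degree_pos]
      exact lt_of_lt_of_le hn (Polynomial.le_natDegree_of_ne_zero (hcoeff ▸ hc))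
    obtain ⟨a, ha⟩ := Complex.exists_root hf
    refine ⟨(a, 1), by simp, ?_⟩
    simpa [f, Polynomial.eval_finsetSum] using ha

lemma mk_mem_doubleRootSet_span_iff {p q : P2} (hp : p ∈ Vcubic) (hq : q ∈ Vcubic)
    (hpq : LinearIndependent ℂ ![p, q]) {z : ℂ × ℂ} (hz : z ≠ 0) :
    Projectivization.mk ℂ z hz ∈ doubleRootSet (Submodule.span ℂ {p, q}) ↔
      wedge (gradAt p z) (gradAt q z) = 0 := by
  rw [mk_mem_doubleRootSet_iff, wedge_eq_zero_iff_exists]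
  constructor
  · rintro ⟨r, hr, hr0, hdvd⟩
    obtain ⟨x, y, rfl⟩ := Submodule.mem_span_pair.mp hr
    refine ⟨x, y, ?_, ?_⟩
    · rintro h
      obtain ⟨rfl, rfl⟩ := Prod.mk_eq_zero.mp h
      simp at hr0
    · rw [← gradAt_add_smul]
      exact gradAt_eq_zero_of_lf_sq_dvd hdvd
  · rintro ⟨x, y, hxy, h⟩
    refine ⟨x • p + y • q, Submodule.mem_span_pair.mpr ⟨x, y, rfl⟩, ?_, ?_⟩
    · intro h0
      obtain ⟨rfl, rfl⟩ := LinearIndependent.pair_iff.mp hpq x y h0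
      exact hxy rfl
    · rw [lf_sq_dvd_iff_gradAt_eq_zero (add_mem (Submodule.smul_mem _ x hp)
        (Submodule.smul_mem _ y hq)) hz, gradAt_add_smul]
      exact h

lemma doubleRootSet_nonempty {W : Submodule ℂ P2} (hle : W ≤ Vcubic)
    (hW : Module.finrank ℂ W = 2) : (doubleRootSet W).Nonempty := by
  obtain ⟨p, q, hpq, hp, hq⟩ := exists_linearIndependent_pair_of_finrank_eq_two hW
  rw [← span_pair_eq_of_finrank_eq_two hW hpq hp hq]
  obtain ⟨a, b, c, d, rfl⟩ := exists_eq_cubic (hle hp)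
  obtain ⟨a', b', c', d', rfl⟩ := exists_eq_cubic (hle hq)
  -- the coefficients of the binary quartic `z ↦ wedge (gradAt p z) (gradAt q z)`
  obtain ⟨z, hz, hJ⟩ := exists_ne_zero_binaryForm_eq_zero (n := 4) (by norm_num)
    (fun i => [3 * (c * d' - c' * d), 6 * (b * d' - b' * d),
      9 * (a * d' - a' * d) + 3 * (b * c' - b' * c), 6 * (a * c' - a' * c),
      3 * (a * b' - a' * b)].getD i 0)
  refine ⟨_, (mk_mem_doubleRootSet_span_iff (hle hp) (hle hq) hpq hz).mpr ?_⟩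
  simp only [Finset.sum_range_succ, Finset.sum_range_zero, List.getD_cons_zero,
    List.getD_cons_succ] at hJ
  simp only [gradAt_cubic, wedge]
  linear_combination hJ

lemma mk_eq_mk_iff_wedge_eq_zero {u v : ℂ × ℂ} (hu : u ≠ 0) (hv : v ≠ 0) :
    Projectivization.mk ℂ u hu = Projectivization.mk ℂ v hv ↔ wedge u v = 0 := by
  rw [Projectivization.mk_eq_mk_iff']
  constructor
  · rintro ⟨t, rfl⟩
    simp only [wedge, Prod.smul_fst, Prod.smul_snd, smul_eq_mul]
    ring
  · intro h
    obtain ⟨x, y, hxy, h⟩ := wedge_eq_zero_iff_exists.mp h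
    have hx : x ≠ 0 := by
      rintro rfl
      have hy : y ≠ 0 := fun hy => hxy (by simp [hy])
      exact hv (by simpa [hy] using h)
    refine ⟨-y / x, ?_⟩
    rw [← sub_eq_zero, ← smul_eq_zero_iff_right hx, smul_sub, smul_smul, mul_div_cancel₀ _ hx]
    rw [← neg_eq_zero, ← h, neg_sub, neg_smul, sub_neg_eq_add]

lemma wedge_rep_ne_zero {P Q : CP1} (h : P ≠ Q) : wedge P.rep Q.rep ≠ 0 := by
  rwa [← P.mk_rep, ← Q.mk_rep, Ne, mk_eq_mk_iff_wedge_eq_zero] at h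

lemma crossRatio_eq_wedge (z₁ z₂ z₃ z₄ : ℂ × ℂ) :
    crossRatio z₁ z₂ z₃ z₄ =
      wedge z₃ z₁ * wedge z₄ z₂ / (wedge z₃ z₂ * wedge z₄ z₁) := rfl

lemma crossRatio_smul {s₁ s₂ s₃ s₄ : ℂ} (h₁ : s₁ ≠ 0) (h₂ : s₂ ≠ 0) (h₃ : s₃ ≠ 0)
    (h₄ : s₄ ≠ 0) (z₁ z₂ z₃ z₄ : ℂ × ℂ) :
    crossRatio (s₁ • z₁) (s₂ • z₂) (s₃ • z₃) (s₄ • z₄) = crossRatio z₁ z₂ z₃ z₄ := by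
  simp only [crossRatio_eq_wedge, wedge_smul_left, wedge_smul_right]
  conv_rhs => rw [← mul_div_mul_left _ _
    (mul_ne_zero (mul_ne_zero (mul_ne_zero h₁ h₂) h₃) h₄)]
  congr 1 <;> ring

lemma crossRatio_eq_of_mk_eq {z₁ z₂ z₃ z₄ w₁ w₂ w₃ w₄ : ℂ × ℂ}
    {hz₁ : z₁ ≠ 0} {hz₂ : z₂ ≠ 0} {hz₃ : z₃ ≠ 0} {hz₄ : z₄ ≠ 0}
    {hw₁ : w₁ ≠ 0} {hw₂ : w₂ ≠ 0} {hw₃ : w₃ ≠ 0} {hw₄ : w₄ ≠ 0}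
    (h₁ : Projectivization.mk ℂ z₁ hz₁ = Projectivization.mk ℂ w₁ hw₁)
    (h₂ : Projectivization.mk ℂ z₂ hz₂ = Projectivization.mk ℂ w₂ hw₂)
    (h₃ : Projectivization.mk ℂ z₃ hz₃ = Projectivization.mk ℂ w₃ hw₃)
    (h₄ : Projectivization.mk ℂ z₄ hz₄ = Projectivization.mk ℂ w₄ hw₄) :
    crossRatio z₁ z₂ z₃ z₄ = crossRatio w₁ w₂ w₃ w₄ := by
  obtain ⟨s₁, rfl⟩ := (Projectivization.mk_eq_mk_iff ℂ _ _ _ _).mp h₁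
  obtain ⟨s₂, rfl⟩ := (Projectivization.mk_eq_mk_iff ℂ _ _ _ _).mp h₂
  obtain ⟨s₃, rfl⟩ := (Projectivization.mk_eq_mk_iff ℂ _ _ _ _).mp h₃
  obtain ⟨s₄, rfl⟩ := (Projectivization.mk_eq_mk_iff ℂ _ _ _ _).mp h₄
  exact crossRatio_smul s₁.ne_zero s₂.ne_zero s₃.ne_zero s₄.ne_zero _ _ _ _

lemma wedge_eq_zero_of_crossRatio_eq {z₁ z₂ z₄ w w' : ℂ × ℂ}
    (h₁₂ : wedge z₁ z₂ ≠ 0) (h₄₁ : wedge z₄ z₁ ≠ 0) (h₄₂ : wedge z₄ z₂ ≠ 0)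
    (hw : wedge w z₂ ≠ 0) (hw' : wedge w' z₂ ≠ 0)
    (h : crossRatio z₁ z₂ w z₄ = crossRatio z₁ z₂ w' z₄) : wedge w w' = 0 := by
  rw [crossRatio_eq_wedge, crossRatio_eq_wedge,
    div_eq_div_iff (mul_ne_zero hw h₄₁) (mul_ne_zero hw' h₄₁)] at h
  have key : (wedge z₄ z₂ * wedge z₄ z₁) * (wedge z₁ z₂ * wedge w w') = 0 := by
    simp only [wedge] at h ⊢
    linear_combination h
  have := (mul_eq_zero.mp key).resolve_left (mul_ne_zero h₄₂ h₄₁)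
  exact (mul_eq_zero.mp this).resolve_left h₁₂

abbrev SL2 := Matrix.SpecialLinearGroup (Fin 2) ℂ

def mkSL2 (a b c d : ℂ) (h : a * d - b * c = 1) : SL2 :=
  ⟨!![a, b; c, d], by rw [Matrix.det_fin_two_of]; exact h⟩

@[simp] lemma mkSL2_val (a b c d : ℂ) (h : a * d - b * c = 1) :
    (mkSL2 a b c d h).1 = !![a, b; c, d] := rfl

def vecAct (g : SL2) : ℂ × ℂ →ₗ[ℂ] ℂ × ℂ where
  toFun z := (g.1 0 0 * z.1 + g.1 0 1 * z.2, g.1 1 0 * z.1 + g.1 1 1 * z.2)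
  map_add' u v := by ext <;> simp only [Prod.fst_add, Prod.snd_add] <;> ring
  map_smul' t u := by
    ext <;> simp only [Prod.smul_fst, Prod.smul_snd, smul_eq_mul, RingHom.id_apply] <;> ring

lemma vecAct_apply (g : SL2) (z : ℂ × ℂ) :
    vecAct g z = (g.1 0 0 * z.1 + g.1 0 1 * z.2, g.1 1 0 * z.1 + g.1 1 1 * z.2) := rfl

lemma vecAct_mul (g h : SL2) (z : ℂ × ℂ) : vecAct (g * h) z = vecAct g (vecAct h z) := by
  simp only [vecAct_apply, Matrix.SpecialLinearGroup.coe_mul, Matrix.mul_apply, Fin.sum_univ_two]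
  ext <;> ring

lemma vecAct_one (z : ℂ × ℂ) : vecAct 1 z = z := by
  simp [vecAct_apply]

@[simp] lemma vecAct_inv_vecAct (g : SL2) (z : ℂ × ℂ) : vecAct g⁻¹ (vecAct g z) = z := by
  rw [← vecAct_mul, inv_mul_cancel, vecAct_one]

lemma vecAct_injective (g : SL2) : Function.Injective (vecAct g) :=
  Function.LeftInverse.injective (vecAct_inv_vecAct g)

lemma vecAct_ne_zero (g : SL2) {z : ℂ × ℂ} (hz : z ≠ 0) : vecAct g z ≠ 0 :=
  (map_ne_zero_iff _ (vecAct_injective g)).mpr hz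

lemma det_eq_one (g : SL2) : g.1 0 0 * g.1 1 1 - g.1 0 1 * g.1 1 0 = 1 := by
  rw [← Matrix.det_fin_two]
  exact g.2

lemma wedge_vecAct (g : SL2) (u v : ℂ × ℂ) : wedge (vecAct g u) (vecAct g v) = wedge u v := by
  simp only [wedge, vecAct_apply]
  linear_combination (u.1 * v.2 - v.1 * u.2) * det_eq_one g

lemma crossRatio_vecAct (g : SL2) (z₁ z₂ z₃ z₄ : ℂ × ℂ) :
    crossRatio (vecAct g z₁) (vecAct g z₂) (vecAct g z₃) (vecAct g z₄) =
      crossRatio z₁ z₂ z₃ z₄ := by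
  simp only [crossRatio_eq_wedge, wedge_vecAct]

def projAct (g : SL2) : CP1 → CP1 := Projectivization.map (vecAct g) (vecAct_injective g)

lemma projAct_mk (g : SL2) {z : ℂ × ℂ} (hz : z ≠ 0) :
    projAct g (Projectivization.mk ℂ z hz) =
      Projectivization.mk ℂ (vecAct g z) (vecAct_ne_zero g hz) := rfl

lemma projAct_mul (g h : SL2) (P : CP1) : projAct (g * h) P = projAct g (projAct h P) := by
  induction P using Projectivization.ind with
  | h z hz => simp only [projAct_mk, vecAct_mul]

@[simp] lemma projAct_inv_projAct (g : SL2) (P : CP1) : projAct g⁻¹ (projAct g P) = P := by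
  induction P using Projectivization.ind with
  | h z hz => simp only [projAct_mk, vecAct_inv_vecAct]

lemma projAct_injective (g : SL2) : Function.Injective (projAct g) :=
  Function.LeftInverse.injective (projAct_inv_projAct g)

def frameVec : Fin 3 → ℂ × ℂ := ![(1, 0), (0, 1), (1, 1)]

lemma frameVec_ne_zero (i : Fin 3) : frameVec i ≠ 0 := by
  fin_cases i <;> simp [frameVec]

def framePt (i : Fin 3) : CP1 := Projectivization.mk ℂ (frameVec i) (frameVec_ne_zero i)

lemma exists_projAct_framePt_eq {P : Fin 3 → CP1} (hP : Function.Injective P) :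
    ∃ g : SL2, ∀ i, projAct g (framePt i) = P i := by
  set u := fun i => (P i).rep
  have hw : ∀ i j, i ≠ j → wedge (u i) (u j) ≠ 0 := fun i j hij =>
    wedge_rep_ne_zero (hP.ne hij)
  set a := wedge (u 2) (u 1)
  set b := wedge (u 0) (u 2)
  set w := wedge (u 0) (u 1)
  have ha : a ≠ 0 := hw 2 1 (by decide)
  have hb : b ≠ 0 := hw 0 2 (by decide)
  have hw' : w ≠ 0 := hw 0 1 (by decide)
  -- The columns `a • u 0` and `b • u 1` add up to `w • u 2` (Cramer's rule); `τ` makes the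
  -- determinant `1`.
  obtain ⟨τ, hτ⟩ := IsAlgClosed.exists_pow_nat_eq (a * b * w)⁻¹ two_pos
  have hτ0 : τ ≠ 0 := by
    rintro rfl
    exact inv_ne_zero (mul_ne_zero (mul_ne_zero ha hb) hw') (by simpa using hτ.symm)
  let g := mkSL2 (τ * a * (u 0).1) (τ * b * (u 1).1) (τ * a * (u 0).2) (τ * b * (u 1).2) (by
    have : τ ^ 2 * (a * b * w) = 1 := by
      rw [hτ, inv_mul_cancel₀ (mul_ne_zero (mul_ne_zero ha hb) hw')]
    simp only [w, wedge] at this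
    linear_combination this)
  refine ⟨g, fun i => ?_⟩
  rw [← (P i).mk_rep, framePt, projAct_mk, Projectivization.mk_eq_mk_iff']
  fin_cases i
  · exact ⟨τ * a, by ext <;> simp [g, vecAct_apply, frameVec, u]⟩
  · exact ⟨τ * b, by ext <;> simp [g, vecAct_apply, frameVec, u]⟩
  · refine ⟨τ * w, ?_⟩
    ext <;>
      simp only [g, vecAct_apply, mkSL2_val, frameVec, u, a, b, w, wedge, Prod.smul_fst,
        Prod.smul_snd, smul_eq_mul, Fin.reduceFinMk, Matrix.of_apply, Matrix.cons_val,
        Matrix.cons_val', Matrix.cons_val_zero, Matrix.cons_val_one, Matrix.cons_val_fin_one,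
        mul_one] <;>
      ring

lemma exists_projAct_eq_of_injective {P Q : Fin 3 → CP1} (hP : Function.Injective P)
    (hQ : Function.Injective Q) : ∃ g : SL2, ∀ i, projAct g (P i) = Q i := by
  obtain ⟨h, hh⟩ := exists_projAct_framePt_eq hP
  obtain ⟨k, hk⟩ := exists_projAct_framePt_eq hQ
  exact ⟨k * h⁻¹, fun i => by rw [projAct_mul, ← hh, projAct_inv_projAct, hk]⟩

lemma subst_comp (g h : SL2) : (subst g).comp (subst h) = subst (h * g) := by
  apply MvPolynomial.algHom_ext
  intro i
  fin_cases i <;>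
    simp only [subst, Xv, Yv, AlgHom.coe_comp, Function.comp_apply, map_add, map_mul, aeval_C,
      aeval_X, algebraMap_eq, Matrix.SpecialLinearGroup.coe_mul, Matrix.mul_apply,
      Fin.sum_univ_two, Fin.zero_eta, Fin.mk_one] <;>
    ring

lemma subst_subst (g h : SL2) (p : P2) : subst g (subst h p) = subst (h * g) p := by
  rw [← subst_comp]; rfl

lemma subst_one_eq_id : subst 1 = AlgHom.id ℂ P2 := by
  apply MvPolynomial.algHom_ext
  intro i
  fin_cases i <;> simp [subst, Xv, Yv]

@[simp] lemma subst_inv_subst (g : SL2) (p : P2) : subst g⁻¹ (subst g p) = p := by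
  rw [subst_subst, mul_inv_cancel, subst_one_eq_id, AlgHom.id_apply]

@[simp] lemma subst_subst_inv (g : SL2) (p : P2) : subst g (subst g⁻¹ p) = p := by
  rw [subst_subst, inv_mul_cancel, subst_one_eq_id, AlgHom.id_apply]

lemma subst_C (g : SL2) (c : ℂ) : subst g (C c) = C c := by
  simp [subst]

lemma subst_lf (g : SL2) (z : ℂ × ℂ) :
    subst g (lf z.1 z.2) = lf (vecAct g⁻¹ z).1 (vecAct g⁻¹ z).2 := by
  simp only [subst, lf, Xv, Yv, map_add, map_sub, map_mul, map_neg, aeval_C, aeval_X,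
    algebraMap_eq, vecAct_apply, Matrix.SpecialLinearGroup.coe_inv, Matrix.adjugate_fin_two,
    Matrix.of_apply, Matrix.cons_val', Matrix.cons_val_zero, Matrix.cons_val_one,
    Matrix.cons_val_fin_one]
  ring

lemma subst_cubic (g : SL2) (a b c d : ℂ) :
    subst g (cubic a b c d) =
      cubic (a * g.1 0 0 ^ 3 + b * g.1 0 0 ^ 2 * g.1 1 0 + c * g.1 0 0 * g.1 1 0 ^ 2
            + d * g.1 1 0 ^ 3)
          (3 * a * g.1 0 0 ^ 2 * g.1 0 1
            + b * (g.1 0 0 ^ 2 * g.1 1 1 + 2 * g.1 0 0 * g.1 0 1 * g.1 1 0)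
            + c * (2 * g.1 0 0 * g.1 1 0 * g.1 1 1 + g.1 0 1 * g.1 1 0 ^ 2)
            + 3 * d * g.1 1 0 ^ 2 * g.1 1 1)
          (3 * a * g.1 0 0 * g.1 0 1 ^ 2
            + b * (2 * g.1 0 0 * g.1 0 1 * g.1 1 1 + g.1 0 1 ^ 2 * g.1 1 0)
            + c * (g.1 0 0 * g.1 1 1 ^ 2 + 2 * g.1 0 1 * g.1 1 0 * g.1 1 1)
            + 3 * d * g.1 1 0 * g.1 1 1 ^ 2)
          (a * g.1 0 1 ^ 3 + b * g.1 0 1 ^ 2 * g.1 1 1 + c * g.1 0 1 * g.1 1 1 ^ 2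
            + d * g.1 1 1 ^ 3) := by
  simp only [cubic, map_add, map_mul, map_pow, subst, aeval_C, aeval_X, Xv, Yv,
    algebraMap_eq, map_ofNat]
  ring

lemma subst_mem_Vcubic (g : SL2) {p : P2} (hp : p ∈ Vcubic) : subst g p ∈ Vcubic := by
  rw [eq_cubic_of_mem_Vcubic hp, subst_cubic]
  exact cubic_mem_Vcubic _ _ _ _

lemma omegaForm_subst (g : SL2) {p q : P2} (hp : p ∈ Vcubic) (hq : q ∈ Vcubic) :
    omegaForm (subst g p) (subst g q) = omegaForm p q := by
  rw [eq_cubic_of_mem_Vcubic hp, eq_cubic_of_mem_Vcubic hq, subst_cubic, subst_cubic,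
    omegaForm_cubic, omegaForm_cubic]
  set δ := g.1 0 0 * g.1 1 1 - g.1 0 1 * g.1 1 0
  -- `ω(g·p, g·q) = δ³ ω(p, q)` and `δ³ - 1 = (δ² + δ + 1) (δ - 1)`
  linear_combination (δ ^ 2 + δ + 1) * (cf 3 0 p * cf 0 3 q - cf 0 3 p * cf 3 0 q
    - (1 / 3) * (cf 2 1 p * cf 1 2 q - cf 1 2 p * cf 2 1 q)) * det_eq_one g

lemma _root_.IsPerfectCube.subst {p : P2} (hp : IsPerfectCube p) (g : SL2) :
    IsPerfectCube (subst g p) := by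
  obtain ⟨c, a, b, hc, hab, rfl⟩ := hp
  have hz : vecAct g⁻¹ (a, b) ≠ 0 :=
    vecAct_ne_zero _ (by simpa [Prod.ext_iff, or_iff_not_imp_left] using hab)
  refine ⟨c, (vecAct g⁻¹ (a, b)).1, (vecAct g⁻¹ (a, b)).2, hc, ?_, ?_⟩
  · simpa [Prod.ext_iff, or_iff_not_imp_left] using hz
  · rw [map_mul, map_pow, subst_C, subst_lf g (a, b)]

def substEquiv (g : SL2) : P2 ≃ₗ[ℂ] P2 :=
  LinearEquiv.ofLinearMap (subst g).toLinearMap (subst g⁻¹).toLinearMap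
    (LinearMap.ext (subst_subst_inv g)) (LinearMap.ext (subst_inv_subst g))

lemma finrank_mapAct (g : SL2) (W : Submodule ℂ P2) :
    Module.finrank ℂ (mapAct g W) = Module.finrank ℂ W :=
  (substEquiv g).finrank_map_eq W

lemma mem_mapAct {g : SL2} {W : Submodule ℂ P2} {p : P2} :
    p ∈ mapAct g W ↔ subst g⁻¹ p ∈ W := by
  constructor
  · rintro ⟨q, hq, rfl⟩
    simpa using hq
  · intro hp
    exact ⟨_, hp, subst_subst_inv g p⟩

lemma subst_mem_mapAct {g : SL2} {W : Submodule ℂ P2} {p : P2} (hp : p ∈ W) :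
    subst g p ∈ mapAct g W :=
  ⟨p, hp, rfl⟩

lemma mapAct_mapAct (g h : SL2) (W : Submodule ℂ P2) :
    mapAct g (mapAct h W) = mapAct (h * g) W := by
  ext p
  simp only [mem_mapAct, subst_subst, mul_inv_rev]

@[simp] lemma mapAct_inv_mapAct (g : SL2) (W : Submodule ℂ P2) :
    mapAct g⁻¹ (mapAct g W) = W := by
  ext p
  simp [mem_mapAct]

def HasNoPerfectCube (W : Submodule ℂ P2) : Prop := ¬ ∃ p ∈ W, IsPerfectCube p

lemma HasNoPerfectCube.mapAct {W : Submodule ℂ P2} (hW : HasNoPerfectCube W) (g : SL2) :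
    HasNoPerfectCube (mapAct g W) := by
  rintro ⟨p, hp, hcube⟩
  exact hW ⟨subst g⁻¹ p, mem_mapAct.mp hp, hcube.subst g⁻¹⟩

lemma _root_.IsLagrangian.mapAct {W : Submodule ℂ P2} (hW : IsLagrangian W) (g : SL2) :
    IsLagrangian (mapAct g W) := by
  obtain ⟨hle, hrank, hω⟩ := hW
  refine ⟨?_, (finrank_mapAct g W).trans hrank, ?_⟩
  · rintro _ ⟨q, hq, rfl⟩
    exact subst_mem_Vcubic g (hle hq)
  · rintro _ ⟨p, hp, rfl⟩ _ ⟨q, hq, rfl⟩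
    rw [AlgHom.toLinearMap_apply, AlgHom.toLinearMap_apply, omegaForm_subst g (hle hp) (hle hq)]
    exact hω p hp q hq

lemma projAct_inv_mem_doubleRootSet_mapAct {W : Submodule ℂ P2} {P : CP1}
    (hP : P ∈ doubleRootSet W) (g : SL2) : projAct g⁻¹ P ∈ doubleRootSet (mapAct g W) := by
  induction P using Projectivization.ind with
  | h z hz =>
    obtain ⟨q, hqW, hq0, hdvd⟩ := (mk_mem_doubleRootSet_iff hz).mp hP
    rw [projAct_mk, mk_mem_doubleRootSet_iff, ← subst_lf]
    refine ⟨subst g q, subst_mem_mapAct hqW, ?_, ?_⟩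
    · intro h
      exact hq0 (by simpa using congrArg (subst g⁻¹) h)
    · rw [← map_pow]
      exact map_dvd _ hdvd

lemma doubleRootSet_mapAct (g : SL2) (W : Submodule ℂ P2) :
    doubleRootSet (mapAct g W) = projAct g⁻¹ '' doubleRootSet W := by
  apply subset_antisymm
  · intro P hP
    exact ⟨projAct g P, by simpa using projAct_inv_mem_doubleRootSet_mapAct hP g⁻¹, by simp⟩
  · rintro _ ⟨P, hP, rfl⟩
    exact projAct_inv_mem_doubleRootSet_mapAct hP g

def zeta : ℂ := (-1 + sqrt3 * Complex.I) / 2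

lemma sqrt3_sq : sqrt3 ^ 2 = 3 := by
  rw [sqrt3, ← Complex.ofReal_pow, Real.sq_sqrt (by norm_num)]
  norm_num

lemma zeta_sq_add_zeta_add_one : zeta ^ 2 + zeta + 1 = 0 := by
  rw [zeta]
  linear_combination (-1 / 4 : ℂ) * sqrt3_sq + (sqrt3 ^ 2 / 4) * Complex.I_sq

lemma zeta_pow_three : zeta ^ 3 = 1 := by
  linear_combination (zeta - 1) * zeta_sq_add_zeta_add_one

lemma neg_zeta : -zeta = (1 - sqrt3 * Complex.I) / 2 := by
  rw [zeta]; ring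

lemma zeta_ne_one : zeta ≠ 1 := by
  intro h
  have := zeta_sq_add_zeta_add_one
  rw [h] at this
  norm_num at this

lemma zeta_sq_ne_one : zeta ^ 2 ≠ 1 := by
  intro h
  have hz : zeta = -2 := by linear_combination zeta_sq_add_zeta_add_one - h
  have := zeta_sq_add_zeta_add_one
  rw [hz] at this
  norm_num at this

lemma zeta_ne_zeta_sq : zeta ≠ zeta ^ 2 := by
  intro h
  apply zeta_ne_one
  linear_combination (1 + zeta) * h + zeta_pow_three

lemma eq_one_or_zeta_or_zeta_sq_of_pow_three {r : ℂ} (h : r ^ 3 = 1) :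
    r = 1 ∨ r = zeta ∨ r = zeta ^ 2 := by
  have hfac : (r - 1) * ((r - zeta) * (r - zeta ^ 2)) = 0 := by
    linear_combination h + (r - r ^ 2) * zeta_sq_add_zeta_add_one + (r - 1) * zeta_pow_three
  rcases mul_eq_zero.mp hfac with h1 | h2
  · exact Or.inl (sub_eq_zero.mp h1)
  rcases mul_eq_zero.mp h2 with h2 | h3
  · exact Or.inr (Or.inl (sub_eq_zero.mp h2))
  · exact Or.inr (Or.inr (sub_eq_zero.mp h3))

-- The double roots `∞, 1, ζ², ζ` of `stdLagrangian`, in an order with cross-ratio `-ζ`.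
def stdVec : Fin 4 → ℂ × ℂ := ![(1, 0), (1, 1), (zeta ^ 2, 1), (zeta, 1)]

lemma stdVec_ne_zero (i : Fin 4) : stdVec i ≠ 0 := by
  fin_cases i <;> simp [stdVec]

def stdPt (i : Fin 4) : CP1 := Projectivization.mk ℂ (stdVec i) (stdVec_ne_zero i)

lemma stdPt_injective : Function.Injective stdPt := by
  intro i j h
  by_contra hij
  rw [stdPt, stdPt, mk_eq_mk_iff_wedge_eq_zero] at h
  fin_cases i <;> fin_cases j <;>
    simp_all [stdVec, wedge, sub_ne_zero.mpr zeta_ne_one, sub_ne_zero.mpr zeta_ne_one.symm,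
      sub_ne_zero.mpr zeta_sq_ne_one, sub_ne_zero.mpr zeta_sq_ne_one.symm,
      sub_ne_zero.mpr zeta_ne_zeta_sq, sub_ne_zero.mpr zeta_ne_zeta_sq.symm]

lemma crossRatio_stdVec :
    crossRatio (stdVec 0) (stdVec 1) (stdVec 2) (stdVec 3) = (1 - sqrt3 * Complex.I) / 2 := by
  rw [crossRatio_eq_wedge, div_eq_iff]
  · simp only [stdVec, wedge, Matrix.cons_val, Matrix.cons_val_zero, Matrix.cons_val_one]
    rw [← neg_zeta]
    linear_combination -zeta_pow_three
  · simp only [stdVec, wedge, Matrix.cons_val, Matrix.cons_val_zero, Matrix.cons_val_one]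
    exact fun h => zeta_sq_ne_one (by linear_combination -h)

-- `span {XY², X³ + 2Y³}`
def stdLagrangian : Submodule ℂ P2 := Submodule.span ℂ {cubic 0 0 1 0, cubic 1 0 0 2}

lemma mem_stdLagrangian_iff {p : P2} :
    p ∈ stdLagrangian ↔ ∃ x y : ℂ, p = cubic y 0 x (2 * y) := by
  simp only [stdLagrangian, Submodule.mem_span_pair, smul_cubic, cubic_add_cubic]
  constructor
  · rintro ⟨x, y, rfl⟩
    exact ⟨x, y, by congr 1 <;> ring⟩
  · rintro ⟨x, y, rfl⟩
    exact ⟨x, y, by congr 1 <;> ring⟩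

lemma linearIndependent_stdLagrangian : LinearIndependent ℂ ![cubic 0 0 1 0, cubic 1 0 0 2] := by
  refine LinearIndependent.pair_iff.mpr fun x y h => ?_
  rw [smul_cubic, smul_cubic, cubic_add_cubic, cubic_eq_zero_iff] at h
  exact ⟨by linear_combination h.2.2.1, by linear_combination h.1⟩

lemma isLagrangian_stdLagrangian : IsLagrangian stdLagrangian := by
  refine ⟨?_, ?_, ?_⟩
  · rw [stdLagrangian, Submodule.span_le]
    rintro _ (rfl | rfl) <;> exact cubic_mem_Vcubic _ _ _ _
  · rw [stdLagrangian, ← Matrix.range_cons_cons_empty _ _ ![],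
      finrank_span_eq_card linearIndependent_stdLagrangian,
      Fintype.card_fin]
  · intro p hp q hq
    obtain ⟨x, y, rfl⟩ := mem_stdLagrangian_iff.mp hp
    obtain ⟨x', y', rfl⟩ := mem_stdLagrangian_iff.mp hq
    rw [omegaForm_cubic]
    ring

lemma hasNoPerfectCube_stdLagrangian : HasNoPerfectCube stdLagrangian := by
  rintro ⟨p, hp, c, a, b, hc, hab, rfl⟩
  obtain ⟨x, y, hxy⟩ := mem_stdLagrangian_iff.mp hp
  rw [C_mul_lf_pow_three] at hxy
  have h₃₀ := congrArg (cf 3 0) hxy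
  have h₂₁ := congrArg (cf 2 1) hxy
  have h₀₃ := congrArg (cf 0 3) hxy
  simp only [cf_cubic_30, cf_cubic_21, cf_cubic_03] at h₃₀ h₂₁ h₀₃
  have hab2 : a * b ^ 2 = 0 := by
    have : c * (a * b ^ 2) = 0 := by linear_combination -h₂₁ / 3
    exact (mul_eq_zero.mp this).resolve_left hc
  rcases hab with ha | hb
  · obtain rfl : b = 0 := pow_eq_zero_iff two_ne_zero |>.mp ((mul_eq_zero.mp hab2).resolve_left ha)
    exact mul_ne_zero hc (pow_ne_zero 3 ha) (by linear_combination -h₀₃ + 2 * h₃₀)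
  · obtain rfl : a = 0 := (mul_eq_zero.mp hab2).resolve_right (pow_ne_zero 2 hb)
    exact mul_ne_zero hc (pow_ne_zero 3 hb) (by linear_combination h₃₀ - h₀₃ / 2)

lemma mk_mem_doubleRootSet_stdLagrangian_iff {z : ℂ × ℂ} (hz : z ≠ 0) :
    Projectivization.mk ℂ z hz ∈ doubleRootSet stdLagrangian ↔
      z.2 * (z.2 ^ 3 - z.1 ^ 3) = 0 := by
  rw [stdLagrangian, mk_mem_doubleRootSet_span_iff (cubic_mem_Vcubic _ _ _ _)
    (cubic_mem_Vcubic _ _ _ _)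
    linearIndependent_stdLagrangian hz]
  simp only [gradAt_cubic, wedge]
  constructor <;> intro h
  · linear_combination h / 6
  · linear_combination 6 * h

lemma doubleRootSet_stdLagrangian : doubleRootSet stdLagrangian = Set.range stdPt := by
  ext P
  constructor
  · intro hP
    induction P using Projectivization.ind with | h z hz =>
    obtain ⟨u, v⟩ := z
    replace hP : v * (v ^ 3 - u ^ 3) = 0 := (mk_mem_doubleRootSet_stdLagrangian_iff hz).mp hP
    rcases mul_eq_zero.mp hP with rfl | hv
    · have hu : u ≠ 0 := by simpa using hz
      exact ⟨0, (Projectivization.mk_eq_mk_iff' ℂ _ _ _ _).mpr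
        ⟨u⁻¹, by simp [stdVec, hu]⟩⟩
    · have hv0 : v ≠ 0 := by
        rintro rfl
        exact hz (by simp_all)
      have hr : (u / v) ^ 3 = 1 := by
        rw [div_pow, div_eq_one_iff_eq (pow_ne_zero 3 hv0)]
        linear_combination -hv
      have hmk : ∀ i, stdVec i = (u / v, 1) → stdPt i = Projectivization.mk ℂ (u, v) hz :=
        fun i hi => (Projectivization.mk_eq_mk_iff' ℂ _ _ _ _).mpr
          ⟨v⁻¹, by rw [hi, Prod.smul_mk, smul_eq_mul, smul_eq_mul]; field_simp⟩
      rcases eq_one_or_zeta_or_zeta_sq_of_pow_three hr with h | h | h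
      · exact ⟨1, hmk 1 (by simp [stdVec, h])⟩
      · exact ⟨3, hmk 3 (by simp [stdVec, h])⟩
      · exact ⟨2, hmk 2 (by simp [stdVec, h])⟩
  · rintro ⟨i, rfl⟩
    rw [stdPt, mk_mem_doubleRootSet_stdLagrangian_iff]
    fin_cases i
    · simp [stdVec]
    · simp [stdVec]
    · show (1 : ℂ) * (1 ^ 3 - (zeta ^ 2) ^ 3) = 0
      linear_combination (-1 - zeta ^ 3) * zeta_pow_three
    · show (1 : ℂ) * (1 ^ 3 - zeta ^ 3) = 0
      linear_combination -zeta_pow_three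

lemma exists_vecAct_one_zero_eq {z : ℂ × ℂ} (hz : z ≠ 0) :
    ∃ g : SL2, vecAct g (1, 0) = z := by
  obtain ⟨u, v⟩ := z
  by_cases hu : u = 0
  · have hv : v ≠ 0 := by rintro rfl; simp [hu] at hz
    refine ⟨mkSL2 0 (-v⁻¹) v 0 (by field_simp; ring), ?_⟩
    simp [vecAct_apply, hu]
  · refine ⟨mkSL2 u 0 v u⁻¹ (by field_simp; ring), ?_⟩
    simp [vecAct_apply]

lemma exists_stdPt_zero_mem_doubleRootSet_mapAct {W : Submodule ℂ P2}
    (hW : (doubleRootSet W).Nonempty) : ∃ g : SL2, stdPt 0 ∈ doubleRootSet (mapAct g W) := by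
  obtain ⟨P, hP⟩ := hW
  induction P using Projectivization.ind with | h z hz =>
  obtain ⟨g, hg⟩ := exists_vecAct_one_zero_eq hz
  refine ⟨g, ?_⟩
  rw [doubleRootSet_mapAct]
  refine ⟨_, hP, ?_⟩
  rw [projAct_mk, stdPt]
  congr 1
  rw [← hg, vecAct_inv_vecAct]
  rfl

lemma exists_cubic_mem_of_stdPt_zero_mem {W : Submodule ℂ P2} (hle : W ≤ Vcubic)
    (hcf : HasNoPerfectCube W) (h : stdPt 0 ∈ doubleRootSet W) :
    ∃ c d : ℂ, c ≠ 0 ∧ cubic 0 0 c d ∈ W := by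
  obtain ⟨q, hqW, hq0, hdvd⟩ := (mk_mem_doubleRootSet_iff _).mp h
  obtain ⟨a, b, c, d, rfl⟩ := exists_eq_cubic (hle hqW)
  rw [lf_sq_dvd_iff_gradAt_eq_zero (hle hqW) (stdVec_ne_zero 0), stdVec, Matrix.cons_val_zero,
    gradAt_cubic, Prod.mk_eq_zero] at hdvd
  obtain ⟨rfl, rfl⟩ : a = 0 ∧ b = 0 :=
    ⟨by linear_combination hdvd.1 / 3, by linear_combination hdvd.2⟩
  refine ⟨c, d, fun hc => hcf ⟨_, hqW, ?_⟩, hqW⟩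
  subst hc
  exact isPerfectCube_yCube fun hd => hq0 (by simp [hd, cubic_eq_zero_iff])

lemma exists_xySq_mem_mapAct {W : Submodule ℂ P2} {c d : ℂ} (hc : c ≠ 0)
    (h : cubic 0 0 c d ∈ W) : ∃ g : SL2, cubic 0 0 1 0 ∈ mapAct g W := by
  -- the shear `X ↦ X - (d/c) Y` turns `Y² (cX + dY)` into `cXY²`
  let g := mkSL2 1 (-(d / c)) 0 1 (by ring)
  refine ⟨g, ?_⟩
  have hg : subst g (cubic 0 0 c d) = c • cubic 0 0 1 0 := by
    rw [subst_cubic, smul_cubic]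
    simp [g, mul_div_cancel₀ d hc]
  have := Submodule.smul_mem _ c⁻¹ (subst_mem_mapAct (g := g) h)
  rwa [hg, smul_smul, inv_mul_cancel₀ hc, one_smul] at this

lemma exists_xCube_add_yCube_mem {W : Submodule ℂ P2} (hW : IsLagrangian W)
    (hcf : HasNoPerfectCube W) (h : cubic 0 0 1 0 ∈ W) :
    ∃ a d : ℂ, a ≠ 0 ∧ d ≠ 0 ∧ cubic a 0 0 d ∈ W := by
  obtain ⟨hle, hrank, hω⟩ := hW
  have : FiniteDimensional ℂ W := Module.finite_of_finrank_pos (by omega)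
  have hlt : Submodule.span ℂ {cubic 0 0 1 0} < W := by
    refine Submodule.lt_of_le_of_finrank_lt_finrank (Submodule.span_le.mpr (by simpa)) ?_
    rw [finrank_span_singleton (by simp [cubic_eq_zero_iff]), hrank]
    norm_num
  obtain ⟨p, hpW, hp⟩ := SetLike.exists_of_lt hlt
  obtain ⟨a, b, c, d, rfl⟩ := exists_eq_cubic (hle hpW)
  have hb : b = 0 := by
    have := hω _ h _ hpW
    rw [omegaForm_cubic] at this
    linear_combination 3 * this
  subst hb
  have hq : cubic a 0 0 d ∈ W := by
    have := sub_mem hpW (Submodule.smul_mem W c h)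
    rwa [smul_cubic, cubic_sub_cubic, mul_zero, mul_one, sub_zero, sub_zero, sub_self,
      sub_zero] at this
  have had : ¬(a = 0 ∧ d = 0) := by
    rintro ⟨rfl, rfl⟩
    exact hp (Submodule.mem_span_singleton.mpr ⟨c, by rw [smul_cubic]; congr 1 <;> ring⟩)
  refine ⟨a, d, fun ha => hcf ⟨_, hq, ?_⟩, fun hd => hcf ⟨_, hq, ?_⟩, hq⟩
  · subst ha
    exact isPerfectCube_yCube fun hd => had ⟨rfl, hd⟩
  · subst hd
    exact isPerfectCube_xCube fun ha => had ⟨ha, rfl⟩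

lemma exists_mapAct_eq_stdLagrangian_of_mem {W : Submodule ℂ P2}
    (hW : Module.finrank ℂ W = 2) {a d : ℂ}
    (ha : a ≠ 0) (hd : d ≠ 0) (h₁ : cubic 0 0 1 0 ∈ W) (h₂ : cubic a 0 0 d ∈ W) :
    ∃ g : SL2, mapAct g W = stdLagrangian := by
  -- `diag(t, t⁻¹)` sends `aX³ + dY³` to `at³X³ + dt⁻³Y³ = at³ (X³ + 2Y³)`
  obtain ⟨t, ht⟩ := IsAlgClosed.exists_pow_nat_eq (d / (2 * a)) (n := 6) (by norm_num)
  have ht0 : t ≠ 0 := by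
    rintro rfl
    exact div_ne_zero hd (mul_ne_zero two_ne_zero ha) (by simpa using ht.symm)
  let g := mkSL2 t 0 0 t⁻¹ (by field_simp; ring)
  have hg₁ : subst g (cubic 0 0 1 0) = t⁻¹ • cubic 0 0 1 0 := by
    rw [subst_cubic, smul_cubic]
    simp only [g, mkSL2_val, Matrix.of_apply, Matrix.cons_val', Matrix.cons_val_zero,
      Matrix.cons_val_one, Matrix.cons_val_fin_one, mul_zero, zero_mul, add_zero, zero_add,
      ne_eq, OfNat.ofNat_ne_zero, not_false_eq_true, zero_pow]
    field_simp
  have hg₂ : subst g (cubic a 0 0 d) = (a * t ^ 3) • cubic 1 0 0 2 := by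
    rw [subst_cubic, smul_cubic]
    have hdt : d = 2 * a * t ^ 6 := by rw [ht]; field_simp
    subst hdt
    simp only [g, mkSL2_val, Matrix.of_apply, Matrix.cons_val', Matrix.cons_val_zero,
      Matrix.cons_val_one, Matrix.cons_val_fin_one, mul_zero, zero_mul, add_zero, zero_add,
      ne_eq, OfNat.ofNat_ne_zero, not_false_eq_true, zero_pow]
    field_simp
  refine ⟨g, (span_pair_eq_of_finrank_eq_two ((finrank_mapAct g W).trans hW)
    linearIndependent_stdLagrangian ?_ ?_).symm⟩
  · exact (Submodule.smul_mem_iff _ (inv_ne_zero ht0)).mp (hg₁ ▸ subst_mem_mapAct h₁)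
  · exact (Submodule.smul_mem_iff _ (mul_ne_zero ha (pow_ne_zero 3 ht0))).mp
      (hg₂ ▸ subst_mem_mapAct h₂)

theorem exists_mapAct_eq_stdLagrangian {W : Submodule ℂ P2} (hW : IsLagrangian W)
    (hcf : HasNoPerfectCube W) : ∃ g : SL2, mapAct g W = stdLagrangian := by
  obtain ⟨g₁, h₁⟩ :=
    exists_stdPt_zero_mem_doubleRootSet_mapAct (doubleRootSet_nonempty hW.1 hW.2.1)
  obtain ⟨c, d, hc, h₂⟩ :=
    exists_cubic_mem_of_stdPt_zero_mem (hW.mapAct g₁).1 (hcf.mapAct g₁) h₁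
  obtain ⟨g₂, h₃⟩ := exists_xySq_mem_mapAct hc h₂
  have hW₂ := (hW.mapAct g₁).mapAct g₂
  obtain ⟨a, d, ha, hd, h₄⟩ := exists_xCube_add_yCube_mem hW₂ ((hcf.mapAct g₁).mapAct g₂) h₃
  obtain ⟨g₃, h₅⟩ := exists_mapAct_eq_stdLagrangian_of_mem hW₂.2.1 ha hd h₃ h₄
  exact ⟨g₁ * (g₂ * g₃), by rwa [mapAct_mapAct, mapAct_mapAct] at h₅⟩

lemma exists_cubic_mem_of_stdPt_one_mem {W : Submodule ℂ P2} (hle : W ≤ Vcubic)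
    (h : stdPt 1 ∈ doubleRootSet W) :
    ∃ a b : ℂ, (a, b) ≠ 0 ∧ cubic a b (-3 * a - 2 * b) (2 * a + b) ∈ W := by
  obtain ⟨q, hqW, hq0, hdvd⟩ := (mk_mem_doubleRootSet_iff _).mp h
  obtain ⟨a, b, c, d, rfl⟩ := exists_eq_cubic (hle hqW)
  rw [lf_sq_dvd_iff_gradAt_eq_zero (hle hqW) (stdVec_ne_zero 1), stdVec, Matrix.cons_val_one,
    Matrix.cons_val_zero, gradAt_cubic, Prod.mk_eq_zero] at hdvd
  obtain ⟨h₁, h₂⟩ := hdvd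
  have hc : c = -3 * a - 2 * b := by linear_combination h₁
  have hd : d = 2 * a + b := by linear_combination (h₂ - 2 * h₁) / 3
  subst hc hd
  refine ⟨a, b, ?_, hqW⟩
  rintro h
  obtain ⟨rfl, rfl⟩ := Prod.mk_eq_zero.mp h
  simp [cubic_eq_zero_iff] at hq0

lemma wedge_gradAt_cubic_pair (a b c d u : ℂ) :
    wedge (gradAt (cubic 0 0 c d) (u, 1)) (gradAt (cubic a b (-3 * a - 2 * b) (2 * a + b)) (u, 1)) =
      (u - 1) * (-6 * a * c * u ^ 2 - 3 * (b * c + 2 * a * c + 3 * a * d) * u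
        - 3 * (b * c + 2 * a * c + 3 * a * d + 2 * b * d)) := by
  simp only [gradAt_cubic, wedge]
  ring

lemma linearIndependent_cubic_pair {a b c d : ℂ} (hc : c ≠ 0) (hab : (a, b) ≠ 0) :
    LinearIndependent ℂ ![cubic 0 0 c d, cubic a b (-3 * a - 2 * b) (2 * a + b)] := by
  refine LinearIndependent.pair_iff.mpr fun x y h => ?_
  simp only [smul_cubic, cubic_add_cubic, cubic_eq_zero_iff] at h
  obtain ⟨ha, hb, hc', -⟩ := h
  obtain rfl : y = 0 := by
    by_contra hy
    exact hab (Prod.ext (by simpa [hy] using ha) (by simpa [hy] using hb))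
  exact ⟨by simpa [hc] using hc', rfl⟩

lemma eq_stdLagrangian_of_mem {W : Submodule ℂ P2} (hW : Module.finrank ℂ W = 2) {a c : ℂ}
    (ha : a ≠ 0) (hc : c ≠ 0) (hp : cubic 0 0 c 0 ∈ W)
    (hq : cubic a 0 (-3 * a) (2 * a) ∈ W) :
    W = stdLagrangian := by
  have hxySq : cubic 0 0 1 0 ∈ W := by
    have := Submodule.smul_mem W c⁻¹ hp
    rwa [smul_cubic, mul_zero, inv_mul_cancel₀ hc] at this
  have hxCube : cubic 1 0 0 2 ∈ W := by
    convert add_mem (Submodule.smul_mem W a⁻¹ hq) (Submodule.smul_mem W 3 hxySq) using 1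
    rw [smul_cubic, smul_cubic, cubic_add_cubic]
    congr 1 <;> field_simp <;> ring
  exact (span_pair_eq_of_finrank_eq_two hW linearIndependent_stdLagrangian hxySq hxCube).symm

theorem eq_stdLagrangian_of_range_stdPt_subset {W : Submodule ℂ P2} (hW : IsLagrangian W)
    (hcf : HasNoPerfectCube W) (hS : Set.range stdPt ⊆ doubleRootSet W) : W = stdLagrangian := by
  obtain ⟨hle, hrank, hω⟩ := hW
  obtain ⟨c, d, hc, hp⟩ := exists_cubic_mem_of_stdPt_zero_mem hle hcf (hS ⟨0, rfl⟩)
  obtain ⟨a, b, hab, hq⟩ := exists_cubic_mem_of_stdPt_one_mem hle (hS ⟨1, rfl⟩)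
  have hpq := linearIndependent_cubic_pair (d := d) hc hab
  have hJ : ∀ i, wedge (gradAt (cubic 0 0 c d) (stdVec i))
      (gradAt (cubic a b (-3 * a - 2 * b) (2 * a + b)) (stdVec i)) = 0 := fun i => by
    have := hS ⟨i, rfl⟩
    rwa [← span_pair_eq_of_finrank_eq_two hrank hpq hp hq, stdPt,
      mk_mem_doubleRootSet_span_iff (hle hp) (hle hq) hpq] at this
  have hζ := (mul_eq_zero.mp ((wedge_gradAt_cubic_pair a b c d zeta).symm.trans
    (hJ 3))).resolve_left (sub_ne_zero.mpr zeta_ne_one)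
  have hζ2 := (mul_eq_zero.mp ((wedge_gradAt_cubic_pair a b c d (zeta ^ 2)).symm.trans
    (hJ 2))).resolve_left (sub_ne_zero.mpr zeta_sq_ne_one)
  have h₁ : b * c + 3 * a * d = 0 := by
    refine (mul_eq_zero.mp ?_).resolve_left (sub_ne_zero.mpr zeta_ne_zeta_sq)
    linear_combination (-(1 : ℂ) / 3) * (hζ - hζ2) + 2 * a * c * zeta * zeta_pow_three
  have h₂ : b * c - 3 * a * d = 0 := by
    have := hω _ hp _ hq
    rw [omegaForm_cubic] at this
    linear_combination 3 * this
  obtain rfl : b = 0 :=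
    (mul_eq_zero.mp (by linear_combination (h₁ + h₂) / 2 : b * c = 0)).resolve_right hc
  have ha : a ≠ 0 := fun ha => hab (by simp [ha])
  obtain rfl : d = 0 :=
    (mul_eq_zero.mp (by linear_combination (h₁ - h₂) / 6 : a * d = 0)).resolve_left ha
  exact eq_stdLagrangian_of_mem hrank ha hc hp (by simpa using hq)

lemma isRegularIdealVertexSet_image_stdPt (g : SL2) :
    IsRegularIdealVertexSet (projAct g '' Set.range stdPt) := by
  refine ⟨fun i => vecAct g (stdVec i), fun i => vecAct_ne_zero g (stdVec_ne_zero i),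
    ?_, ?_, ?_⟩
  · exact (projAct_injective g).comp stdPt_injective
  · rw [← Set.range_comp]
    rfl
  · rw [crossRatio_vecAct, crossRatio_stdVec]

lemma exists_eq_image_stdPt {S : Set CP1} (hS : IsRegularIdealVertexSet S) :
    ∃ g : SL2, S = projAct g '' Set.range stdPt := by
  obtain ⟨z, hz, hinj, rfl, hcr⟩ := hS
  set Q : Fin 4 → CP1 := fun i => Projectivization.mk ℂ (z i) (hz i)
  -- move `∞, 1, ζ` to the points `0, 1, 3`; the cross-ratio then forces `ζ²` onto point `2`
  have hσ : Function.Injective ![(0 : Fin 4), 1, 3] := by decide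
  obtain ⟨g, hg⟩ := exists_projAct_eq_of_injective (stdPt_injective.comp hσ) (hinj.comp hσ)
  have hg₀ : projAct g (stdPt 0) = Q 0 := hg 0
  have hg₁ : projAct g (stdPt 1) = Q 1 := hg 1
  have hg₃ : projAct g (stdPt 3) = Q 3 := hg 2
  have hwedge : ∀ i j, i ≠ j → wedge (z i) (z j) ≠ 0 := fun i j hij =>
    (mk_eq_mk_iff_wedge_eq_zero (hz i) (hz j)).not.mp (hinj.ne hij)
  set w := vecAct g (stdVec 2)
  have hw : w ≠ 0 := vecAct_ne_zero g (stdVec_ne_zero 2)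
  have hw₁ : wedge w (z 1) ≠ 0 := by
    refine (mk_eq_mk_iff_wedge_eq_zero hw (hz 1)).not.mp fun h => ?_
    exact (projAct_injective g).ne (stdPt_injective.ne (by decide : (2 : Fin 4) ≠ 1))
      (h.trans hg₁.symm)
  have hcr' : crossRatio (z 0) (z 1) w (z 3) = crossRatio (z 0) (z 1) (z 2) (z 3) := by
    rw [hcr, ← crossRatio_stdVec, ← crossRatio_vecAct g (stdVec 0)]
    exact crossRatio_eq_of_mk_eq hg₀.symm hg₁.symm (rfl : Projectivization.mk ℂ w hw = _)
      hg₃.symm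
  have hg₂ : projAct g (stdPt 2) = Q 2 :=
    (mk_eq_mk_iff_wedge_eq_zero hw (hz 2)).mpr (wedge_eq_zero_of_crossRatio_eq
      (hwedge 0 1 (by decide)) (hwedge 3 0 (by decide)) (hwedge 3 1 (by decide)) hw₁
      (hwedge 2 1 (by decide)) hcr')
  refine ⟨g, ?_⟩
  rw [← Set.range_comp]
  congr 1
  funext i
  fin_cases i
  · exact hg₀.symm
  · exact hg₁.symm
  · exact hg₂.symm
  · exact hg₃.symm

lemma isRegularIdealVertexSet_iff {S : Set CP1} :
    IsRegularIdealVertexSet S ↔ ∃ g : SL2, S = projAct g '' Set.range stdPt :=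
  ⟨exists_eq_image_stdPt, by rintro ⟨g, rfl⟩; exact isRegularIdealVertexSet_image_stdPt g⟩

end BinaryCubic

open BinaryCubic

/-- The map assigning to each Lagrangian of `V` containing no perfect
cube the 4-element set of double roots of its elements with a repeated root is a bijection
from the set of such Lagrangians onto the set of ideal vertex sets of regular ideal
hyperbolic tetrahedra. -/
theorem statement11 :
    Set.BijOn doubleRootSet
      {W : Submodule ℂ P2 | IsLagrangian W ∧ ¬ ∃ p ∈ W, IsPerfectCube p}
      {S : Set CP1 | IsRegularIdealVertexSet S} := by
  have hstd (g : SL2) :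
      doubleRootSet (mapAct g stdLagrangian) = projAct g⁻¹ '' Set.range stdPt := by
    rw [doubleRootSet_mapAct, doubleRootSet_stdLagrangian]
  refine ⟨?_, ?_, ?_⟩
  · rintro W ⟨hW, hcf⟩
    obtain ⟨g, hg⟩ := exists_mapAct_eq_stdLagrangian hW hcf
    rw [← mapAct_inv_mapAct g W, hg]
    exact isRegularIdealVertexSet_iff.mpr ⟨_, hstd g⁻¹⟩
  · rintro W ⟨hW, hcf⟩ W' ⟨hW', hcf'⟩ hS
    obtain ⟨g, hg⟩ := exists_mapAct_eq_stdLagrangian hW hcf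
    have hg' : mapAct g W' = stdLagrangian :=
      eq_stdLagrangian_of_range_stdPt_subset (hW'.mapAct g) (HasNoPerfectCube.mapAct hcf' g) <| by
        rw [doubleRootSet_mapAct, ← hS, ← doubleRootSet_mapAct, hg, doubleRootSet_stdLagrangian]
    rw [← mapAct_inv_mapAct g W, ← mapAct_inv_mapAct g W', hg, hg']
  · intro S hS
    obtain ⟨g, rfl⟩ := isRegularIdealVertexSet_iff.mp hS
    refine ⟨mapAct g⁻¹ stdLagrangian,
      ⟨isLagrangian_stdLagrangian.mapAct _, hasNoPerfectCube_stdLagrangian.mapAct _⟩, ?_⟩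
    rw [hstd, inv_inv]
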